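/- arXiv:1405.2140 — 2 statements merged into one kernel-verified Lean document; each statement's English description precedes it below -/
import Mathlib

section
/- Let 0<ν<1 and define ψ(z) = (sin πν/π) ∫_0^∞ s^{-ν} (1−e^{-s}) / (s(1−e^{-z-s})) ds. Then for every z = x+iy with x≥0 and 0<y<π, one has Re ψ(x+iy) ≥ 1/(2Γ(1+ν)) and Im ψ(x+iy) < 0. Moreover, for every real x, ψ(x+iπ) = (sin πν/π) ∫_0^∞ s^{-ν}(1−e^{-s})/(s(1+e^{-x-s})) ds is real and strictly positive. -/
open MeasureTheory

/-- Analytic continuation of the DG generating function `ψ` to the cut strip: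
`ψ(z) = (sin πν / π) ∫_0^∞ s^{-ν} (1 − e^{-s}) / (s (1 − e^{-z-s})) ds`. -/
noncomputable def psiC (ν : ℝ) (z : ℂ) : ℂ :=
  (Real.sin (Real.pi * ν) / Real.pi : ℝ) *
    ∫ s in Set.Ioi (0 : ℝ),
      (↑(s ^ (-ν)) * (1 - Complex.exp (-(s : ℂ)))) / ((s : ℂ) * (1 - Complex.exp (-z - (s : ℂ))))

/-! For `s > 0` the integrand of `psiC ν z` is `k(s) (1 - w)⁻¹`, with the positive weight
`k(s) = s^{-ν-1} (1 - e^{-s})` and `w = e^{-z-s}`. If `Re z ≥ 0`, then `w` lies in the closed unit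
disc, where `Re (1 - w)⁻¹ ≥ 1/2`; if `0 < Im z < π`, then `Im w < 0`, hence `Im (1 - w)⁻¹ < 0`.
Integration by parts gives `∫₀^∞ k = Γ(1 - ν)/ν`, and the reflection formula turns
`(sin πν/π) Γ(1 - ν)/ν` into `1/Γ(1 + ν)`. On the line `Im z = π` the point `w = -e^{-x-s}` is
real and negative, so the integrand is real and positive. -/

open Set Filter Topology

namespace Complex

lemma abs_sin_im_le_norm_one_sub_exp (ζ : ℂ) : |Real.sin ζ.im| ≤ ‖1 - exp ζ‖ := by
  refine sq_le_sq.1 ?_ |>.trans_eq (abs_norm _)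
  rw [Complex.sq_norm, normSq_apply]
  simp only [sub_re, one_re, exp_re, sub_im, one_im, exp_im]
  nlinarith [Real.sin_sq_add_cos_sq ζ.im, sq_nonneg (Real.exp ζ.re - Real.cos ζ.im)]

lemma one_half_le_re_inv_one_sub {w : ℂ} (hw : ‖w‖ ≤ 1) (hw1 : w ≠ 1) :
    1 / 2 ≤ (1 - w)⁻¹.re := by
  have hpos : 0 < normSq (1 - w) := normSq_pos.2 (sub_ne_zero.2 hw1.symm)
  have hw2 : normSq w ≤ 1 := by
    rw [normSq_eq_norm_sq]
    nlinarith [norm_nonneg w]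
  rw [inv_re, le_div_iff₀ hpos]
  simp only [normSq_apply, sub_re, sub_im, one_re, one_im] at hw2 ⊢
  nlinarith

lemma im_inv_one_sub_neg {w : ℂ} (hw : w.im < 0) : (1 - w)⁻¹.im < 0 := by
  have hw1 : w ≠ 1 := fun h => by simp [h] at hw
  rw [inv_im, sub_im, one_im, zero_sub, neg_neg]
  exact div_neg_of_neg_of_pos hw (normSq_pos.2 (sub_ne_zero.2 hw1.symm))

end Complex

lemma setIntegral_pos_of_pos {X : Type*} [MeasurableSpace X] {μ : Measure X} {s : Set X}
    {f : X → ℝ} (hs : MeasurableSet s) (hμs : μ s ≠ 0) (hf : ∀ x ∈ s, 0 < f x)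
    (hint : IntegrableOn f s μ) : 0 < ∫ x in s, f x ∂μ := by
  rw [setIntegral_pos_iff_support_of_nonneg_ae
    (ae_restrict_of_forall_mem hs fun x hx => (hf x hx).le) hint]
  exact (pos_iff_ne_zero.2 hμs).trans_le (measure_mono fun x hx => ⟨(hf x hx).ne', hx⟩)

lemma sin_pi_mul_div_pi_mul_Gamma_one_sub_div {ν : ℝ} (hsin : Real.sin (Real.pi * ν) ≠ 0) :
    Real.sin (Real.pi * ν) / Real.pi * (Real.Gamma (1 - ν) / ν) = 1 / Real.Gamma (1 + ν) := by
  have hν : ν ≠ 0 := by rintro rfl; simp at hsin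
  have hrefl : Real.Gamma ν * Real.Gamma (1 - ν) * Real.sin (Real.pi * ν) = Real.pi := by
    rw [Real.Gamma_mul_Gamma_one_sub, div_mul_cancel₀ _ hsin]
  have hΓ : Real.Gamma ν ≠ 0 := by
    rintro h
    simp [h, Real.pi_ne_zero.symm] at hrefl
  rw [add_comm, Real.Gamma_add_one hν]
  field_simp
  linarith

lemma sin_pi_mul_pos {ν : ℝ} (hν0 : 0 < ν) (hν1 : ν < 1) : 0 < Real.sin (Real.pi * ν) :=
  Real.sin_pos_of_pos_of_lt_pi (by positivity) (by nlinarith [Real.pi_pos])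

noncomputable def psiKernel (ν s : ℝ) : ℝ := s ^ (-ν - 1) * (1 - Real.exp (-s))

lemma one_sub_exp_neg_pos {s : ℝ} (hs : 0 < s) : 0 < 1 - Real.exp (-s) :=
  sub_pos.2 (Real.exp_lt_one_iff.2 (neg_neg_of_pos hs))

lemma one_sub_exp_neg_le (s : ℝ) : 1 - Real.exp (-s) ≤ s := by
  linarith [Real.one_sub_le_exp_neg s]

section Kernel

variable {ν s : ℝ}

lemma psiKernel_pos (hs : 0 < s) : 0 < psiKernel ν s :=
  mul_pos (Real.rpow_pos_of_pos hs _) (one_sub_exp_neg_pos hs)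

lemma psiKernel_eq_div (hs : 0 < s) : psiKernel ν s = s ^ (-ν) * (1 - Real.exp (-s)) / s := by
  rw [psiKernel, Real.rpow_sub_one hs.ne']
  ring

lemma psiKernel_le_rpow_neg (hs : 0 < s) : psiKernel ν s ≤ s ^ (-ν) := by
  rw [psiKernel_eq_div hs, div_le_iff₀ hs]
  exact mul_le_mul_of_nonneg_left (one_sub_exp_neg_le s) (Real.rpow_nonneg hs.le _)

lemma psiKernel_le_rpow_neg_sub_one (hs : 0 < s) : psiKernel ν s ≤ s ^ (-ν - 1) :=
  mul_le_of_le_one_right (Real.rpow_nonneg hs.le _)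
    (sub_le_self _ (Real.exp_pos _).le)

lemma continuousOn_psiKernel : ContinuousOn (psiKernel ν) (Ioi 0) := fun s hs =>
  ((Real.continuousAt_rpow_const s _ (Or.inl (ne_of_gt hs))).mul
    (by fun_prop)).continuousWithinAt

lemma integrableOn_psiKernel (hν0 : 0 < ν) (hν1 : ν < 1) :
    IntegrableOn (psiKernel ν) (Ioi 0) := by
  rw [← Ioc_union_Ioi_eq_Ioi zero_le_one, integrableOn_union]
  constructor
  · have hrpow : IntegrableOn (fun s : ℝ => s ^ (-ν)) (Ioc 0 1) := by
      rw [← intervalIntegrable_iff_integrableOn_Ioc_of_le zero_le_one]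
      exact intervalIntegral.intervalIntegrable_rpow' (by linarith)
    refine hrpow.mono' ((continuousOn_psiKernel.mono Ioc_subset_Ioi_self).aestronglyMeasurable
      measurableSet_Ioc) ?_
    filter_upwards [ae_restrict_mem measurableSet_Ioc] with s hs
    rw [Real.norm_of_nonneg (psiKernel_pos hs.1).le]
    exact psiKernel_le_rpow_neg hs.1
  · have hrpow : IntegrableOn (fun s : ℝ => s ^ (-ν - 1)) (Ioi 1) :=
      integrableOn_Ioi_rpow_of_lt (by linarith) one_pos
    refine hrpow.mono' ((continuousOn_psiKernel.mono
      (Ioi_subset_Ioi zero_le_one)).aestronglyMeasurable measurableSet_Ioi) ?_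
    filter_upwards [ae_restrict_mem measurableSet_Ioi] with s (hs : 1 < s)
    rw [Real.norm_of_nonneg (psiKernel_pos (one_pos.trans hs)).le]
    exact psiKernel_le_rpow_neg_sub_one (one_pos.trans hs)

lemma tendsto_rpow_neg_mul_one_sub_exp_neg_nhdsGT_zero (hν1 : ν < 1) :
    Tendsto (fun s : ℝ => s ^ (-ν) * (1 - Real.exp (-s))) (𝓝[>] 0) (𝓝 0) := by
  have hbound : Tendsto (fun s : ℝ => s ^ (1 - ν)) (𝓝[>] 0) (𝓝 0) := by
    simpa [Real.zero_rpow (sub_pos.2 hν1).ne'] using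
      ((Real.continuousAt_rpow_const 0 (1 - ν) (Or.inr (sub_pos.2 hν1).le)).tendsto).mono_left
        nhdsWithin_le_nhds
  refine squeeze_zero' ?_ ?_ hbound
  · filter_upwards [self_mem_nhdsWithin] with s (hs : 0 < s)
    exact mul_nonneg (Real.rpow_nonneg hs.le _) (one_sub_exp_neg_pos hs).le
  · filter_upwards [self_mem_nhdsWithin] with s (hs : 0 < s)
    calc s ^ (-ν) * (1 - Real.exp (-s)) ≤ s ^ (-ν) * s :=
          mul_le_mul_of_nonneg_left (one_sub_exp_neg_le s) (Real.rpow_nonneg hs.le _)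
      _ = s ^ (1 - ν) := by rw [← Real.rpow_add_one hs.ne']; ring_nf

lemma integral_psiKernel (hν0 : 0 < ν) (hν1 : ν < 1) :
    ∫ s in Ioi 0, psiKernel ν s = Real.Gamma (1 - ν) / ν := by
  have hu : ∀ s ∈ Ioi (0 : ℝ),
      HasDerivAt (fun s => -ν⁻¹ * s ^ (-ν)) (s ^ (-ν - 1)) s := fun s hs =>
    ((Real.hasDerivAt_rpow_const (p := -ν) (Or.inl (ne_of_gt hs))).const_mul (-ν⁻¹)).congr_deriv
      (by field_simp)
  have hv : ∀ s ∈ Ioi (0 : ℝ),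
      HasDerivAt (fun s => 1 - Real.exp (-s)) (Real.exp (-s)) s := fun s _ => by
    simpa using ((Real.hasDerivAt_exp (-s)).comp s (hasDerivAt_neg s)).const_sub 1
  have hEuler : IntegrableOn (fun s : ℝ => s ^ (-ν) * Real.exp (-s)) (Ioi 0) := by
    simpa [mul_comm] using Real.GammaIntegral_convergent (sub_pos.2 hν1)
  have huv' : IntegrableOn ((fun s => -ν⁻¹ * s ^ (-ν)) * fun s => Real.exp (-s)) (Ioi 0) := by
    simp only [Pi.mul_def, mul_assoc]
    exact hEuler.const_mul (-ν⁻¹)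
  have h_zero : Tendsto ((fun s => -ν⁻¹ * s ^ (-ν)) * fun s => 1 - Real.exp (-s))
      (𝓝[>] 0) (𝓝 0) := by
    convert (tendsto_rpow_neg_mul_one_sub_exp_neg_nhdsGT_zero hν1).const_mul (-ν⁻¹) using 1
    · ext s
      simp only [Pi.mul_apply]
      ring
    · simp
  have h_infty : Tendsto ((fun s => -ν⁻¹ * s ^ (-ν)) * fun s => 1 - Real.exp (-s))
      atTop (𝓝 0) := by
    convert ((tendsto_rpow_neg_atTop hν0).mul (tendsto_const_nhds (x := (1 : ℝ)).sub
      Real.tendsto_exp_neg_atTop_nhds_zero)).const_mul (-ν⁻¹) using 1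
    · ext s
      simp only [Pi.mul_apply]
      ring
    · simp
  have hparts := integral_Ioi_mul_deriv_eq_deriv_mul hu hv huv' (integrableOn_psiKernel hν0 hν1)
    h_zero h_infty
  have hGamma : ∫ s in Ioi (0 : ℝ), s ^ (-ν) * Real.exp (-s) = Real.Gamma (1 - ν) := by
    simp [Real.Gamma_eq_integral (sub_pos.2 hν1), mul_comm]
  simp only [mul_assoc, integral_const_mul, hGamma] at hparts
  change _ = _ - _ - ∫ s in Ioi 0, psiKernel ν s at hparts
  rw [show ∫ s in Ioi 0, psiKernel ν s = ν⁻¹ * Real.Gamma (1 - ν) by linarith, inv_mul_eq_div]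

end Kernel

lemma psiC_eq_integral_psiKernel (ν : ℝ) (z : ℂ) :
    psiC ν z = (Real.sin (Real.pi * ν) / Real.pi : ℝ) *
      ∫ s in Ioi (0 : ℝ), (psiKernel ν s : ℂ) * (1 - Complex.exp (-z - s))⁻¹ := by
  rw [psiC]
  congr 1
  refine setIntegral_congr_fun measurableSet_Ioi fun s (hs : 0 < s) => ?_
  rw [psiKernel_eq_div hs, div_mul_eq_div_div, div_eq_mul_inv _ (1 - _)]
  push_cast
  ring

lemma abs_sin_im_le_norm_one_sub_exp_neg_sub (z : ℂ) (s : ℝ) :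
    |Real.sin z.im| ≤ ‖1 - Complex.exp (-z - s)‖ := by
  simpa using Complex.abs_sin_im_le_norm_one_sub_exp (-z - s)

section PsiC

variable {ν : ℝ} {z : ℂ}

lemma integrableOn_psiKernel_mul_inv_one_sub_exp (hν0 : 0 < ν) (hν1 : ν < 1)
    (hz : Real.sin z.im ≠ 0) :
    IntegrableOn (fun s : ℝ => (psiKernel ν s : ℂ) * (1 - Complex.exp (-z - s))⁻¹) (Ioi 0) := by
  have hne : ∀ s : ℝ, 1 - Complex.exp (-z - s) ≠ 0 := fun s =>
    norm_pos_iff.1 ((abs_pos.2 hz).trans_le (abs_sin_im_le_norm_one_sub_exp_neg_sub z s))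
  refine (integrableOn_psiKernel hν0 hν1).ofReal.mul_bdd
    ((Continuous.inv₀ (by fun_prop) hne).aestronglyMeasurable) (c := |Real.sin z.im|⁻¹)
    (ae_of_all _ fun s => ?_)
  rw [norm_inv]
  exact inv_anti₀ (abs_pos.2 hz) (abs_sin_im_le_norm_one_sub_exp_neg_sub z s)

lemma one_div_two_mul_Gamma_le_re_psiC (hν0 : 0 < ν) (hν1 : ν < 1) (hre : 0 ≤ z.re)
    (him : Real.sin z.im ≠ 0) :
    1 / (2 * Real.Gamma (1 + ν)) ≤ (psiC ν z).re := by
  have hint := integrableOn_psiKernel_mul_inv_one_sub_exp hν0 hν1 him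
  have hsin := sin_pi_mul_pos hν0 hν1
  have hpoint : ∀ s ∈ Ioi (0 : ℝ), 1 / 2 * psiKernel ν s ≤
      ((psiKernel ν s : ℂ) * (1 - Complex.exp (-z - s))⁻¹).re := fun s (hs : 0 < s) => by
    have hnorm : ‖Complex.exp (-z - s)‖ ≤ 1 := by
      rw [Complex.norm_exp, Real.exp_le_one_iff]
      simp only [Complex.sub_re, Complex.neg_re, Complex.ofReal_re]
      linarith
    have hne : Complex.exp (-z - s) ≠ 1 := fun h => him <| by
      simpa [Complex.exp_im, Real.exp_ne_zero] using congrArg Complex.im h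
    rw [Complex.re_ofReal_mul, mul_comm]
    exact mul_le_mul_of_nonneg_left (Complex.one_half_le_re_inv_one_sub hnorm hne)
      (psiKernel_pos hs).le
  calc 1 / (2 * Real.Gamma (1 + ν))
      = Real.sin (Real.pi * ν) / Real.pi * (1 / 2 * ∫ s in Ioi 0, psiKernel ν s) := by
        rw [integral_psiKernel hν0 hν1, mul_left_comm,
          sin_pi_mul_div_pi_mul_Gamma_one_sub_div hsin.ne']
        ring
    _ ≤ Real.sin (Real.pi * ν) / Real.pi *
        ∫ s in Ioi 0, ((psiKernel ν s : ℂ) * (1 - Complex.exp (-z - s))⁻¹).re := by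
        rw [← integral_const_mul]
        exact mul_le_mul_of_nonneg_left (setIntegral_mono_on
          ((integrableOn_psiKernel hν0 hν1).const_mul _) hint.re measurableSet_Ioi hpoint)
          (div_pos hsin Real.pi_pos).le
    _ = (psiC ν z).re := by
        rw [psiC_eq_integral_psiKernel, Complex.re_ofReal_mul]
        exact congrArg _ (integral_re hint)

lemma im_psiC_neg (hν0 : 0 < ν) (hν1 : ν < 1) (him : 0 < Real.sin z.im) :
    (psiC ν z).im < 0 := by
  have hint := integrableOn_psiKernel_mul_inv_one_sub_exp hν0 hν1 him.ne'
  have hpoint : ∀ s ∈ Ioi (0 : ℝ),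
      0 < -((psiKernel ν s : ℂ) * (1 - Complex.exp (-z - s))⁻¹).im := fun s (hs : 0 < s) => by
    have hw : (Complex.exp (-z - s)).im < 0 := by
      simpa [Complex.exp_im] using mul_pos (Real.exp_pos (-z.re - s)) him
    rw [Complex.im_ofReal_mul, neg_pos]
    exact mul_neg_of_pos_of_neg (psiKernel_pos hs) (Complex.im_inv_one_sub_neg hw)
  have hpos := setIntegral_pos_of_pos measurableSet_Ioi (by simp) hpoint hint.im.neg
  rw [integral_neg, neg_pos] at hpos
  rw [psiC_eq_integral_psiKernel, Complex.im_ofReal_mul]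
  exact mul_neg_of_pos_of_neg (div_pos (sin_pi_mul_pos hν0 hν1) Real.pi_pos)
    ((integral_im hint).symm.trans_lt hpos)

lemma psiC_ofReal_add_pi_mul_I (ν x : ℝ) :
    psiC ν ((x : ℂ) + (Real.pi : ℂ) * Complex.I) =
      ((Real.sin (Real.pi * ν) / Real.pi *
        ∫ s in Ioi (0 : ℝ), s ^ (-ν) * (1 - Real.exp (-s)) / (s * (1 + Real.exp (-x - s))) : ℝ) :
        ℂ) := by
  rw [psiC, Complex.ofReal_mul, ← integral_complex_ofReal]
  congr 2 with s
  have hexp : Complex.exp (-((x : ℂ) + Real.pi * Complex.I) - s) = -(Real.exp (-x - s) : ℂ) := by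
    rw [show -((x : ℂ) + Real.pi * Complex.I) - s = ((-x - s : ℝ) : ℂ) - Real.pi * Complex.I by
      push_cast; ring, Complex.exp_sub, Complex.exp_pi_mul_I, Complex.ofReal_exp]
    ring
  rw [hexp]
  push_cast
  ring

lemma integral_rpow_mul_one_sub_exp_div_one_add_exp_pos (hν0 : 0 < ν) (hν1 : ν < 1) (x : ℝ) :
    0 < ∫ s in Ioi (0 : ℝ), s ^ (-ν) * (1 - Real.exp (-s)) / (s * (1 + Real.exp (-x - s))) := by
  have heq : EqOn (fun s : ℝ => s ^ (-ν) * (1 - Real.exp (-s)) / (s * (1 + Real.exp (-x - s))))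
      (fun s => psiKernel ν s * (1 + Real.exp (-x - s))⁻¹) (Ioi 0) := fun s (hs : 0 < s) => by
    dsimp only
    rw [psiKernel_eq_div hs, div_mul_eq_div_div, div_eq_mul_inv _ (1 + _)]
  rw [setIntegral_congr_fun measurableSet_Ioi heq]
  refine setIntegral_pos_of_pos measurableSet_Ioi (by simp)
    (fun s hs => mul_pos (psiKernel_pos hs) (by positivity)) ?_
  refine (integrableOn_psiKernel hν0 hν1).mul_bdd (c := 1)
    ((Continuous.inv₀ (by fun_prop) fun s => by positivity).aestronglyMeasurable)
    (ae_of_all _ fun s => ?_)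
  rw [norm_inv, Real.norm_of_nonneg (by positivity)]
  exact inv_le_one_of_one_le₀ (le_add_of_nonneg_right (Real.exp_pos _).le)

end PsiC

theorem stmt14 (ν : ℝ) (hν0 : 0 < ν) (hν1 : ν < 1) :
    (∀ x y : ℝ, 0 ≤ x → 0 < y → y < Real.pi →
      1 / (2 * Real.Gamma (1 + ν)) ≤ (psiC ν ((x : ℂ) + (y : ℂ) * Complex.I)).re ∧
      (psiC ν ((x : ℂ) + (y : ℂ) * Complex.I)).im < 0) ∧
    ∀ x : ℝ,
      psiC ν ((x : ℂ) + (Real.pi : ℂ) * Complex.I)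
        = ((Real.sin (Real.pi * ν) / Real.pi *
            ∫ s in Set.Ioi (0 : ℝ),
              s ^ (-ν) * (1 - Real.exp (-s)) / (s * (1 + Real.exp (-x - s))) : ℝ) : ℂ) ∧
      0 < Real.sin (Real.pi * ν) / Real.pi *
            ∫ s in Set.Ioi (0 : ℝ),
              s ^ (-ν) * (1 - Real.exp (-s)) / (s * (1 + Real.exp (-x - s))) := by
  refine ⟨fun x y hx hy0 hyπ => ?_, fun x => ⟨psiC_ofReal_add_pi_mul_I ν x, ?_⟩⟩
  · have hsin : 0 < Real.sin ((x : ℂ) + y * Complex.I).im := by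
      simpa using Real.sin_pos_of_pos_of_lt_pi hy0 hyπ
    exact ⟨one_div_two_mul_Gamma_le_re_psiC hν0 hν1 (by simpa using hx) hsin.ne',
      im_psiC_neg hν0 hν1 hsin⟩
  · exact mul_pos (div_pos (sin_pi_mul_pos hν0 hν1) Real.pi_pos)
      (integral_rpow_mul_one_sub_exp_div_one_add_exp_pos hν0 hν1 x)
end

section
/- Let 0<ν<1 and μ>0. Define the scalar sequence U^0=1 and, for n≥1, (1+β₀μ)U^n = U^{n-1} − μ Σ_{j=1}^{n-1} β_{n-j} U^j. Let ψ(z) = Γ(1+ν)^{-1}(1 + Σ_{n=1}^∞ ((n+1)^ν − n^ν) e^{-nz}). Then for every a>0 and every n≥1, U^n = (1/(2π)) ∫_{−π}^{π} e^{n(a+iy)} / ((1 + μψ(a+iy))(e^{a+iy} − 1)) dy, where the integral is over the real variable y∈[−π,π]. -/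
/-!
The increments `b_k = (k+1)^ν − k^ν` are nonnegative and decrease from `b_0 = 1` (concavity of
`x ↦ x^ν`), and `Γ(1+ν) β_j = b_j − b_{j-1}`. Hence `∑_{j≥1} |β_j| ≤ β₀`, which makes the
recurrence a contraction in the sense that `|Uⁿ| ≤ 1` for all `n`. For `w = e^{-z}` with
`Re z > 0` every generating function in sight then converges absolutely. Read coefficientwise,
the recurrence is the identity `(∑ Uᵐ wᵐ) (1 − w + μ ∑ β_j wʲ) = 1 + μ ∑ β_j wʲ`, and
`∑ β_j wʲ = (1 − w) ψ(z)` since `Γ(1+ν) ψ(z) = ∑ b_k wᵏ`. So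
`∑_{m≥1} Uᵐ e^{-mz} = 1 / ((1 + μψ(z)) (e^z − 1))`, and integrating `e^{nz}` times this series
termwise over `y ∈ [−π, π]` picks out `2π Uⁿ`, because `∫_{−π}^{π} e^{ijy} dy = 2π δ_{j0}`.
-/

/-- DG weights: `β₀ = 1/Γ(1+ν)`, `β_j = ((j+1)^ν − 2j^ν + (j−1)^ν)/Γ(1+ν)` for `j ≥ 1`. -/
noncomputable def dgBeta (ν : ℝ) : ℕ → ℝ
  | 0 => 1 / Real.Gamma (1 + ν)
  | j + 1 => (((j : ℝ) + 2) ^ ν - 2 * ((j : ℝ) + 1) ^ ν + (j : ℝ) ^ ν) / Real.Gamma (1 + ν)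

/-- The generating function `ψ(z) = Γ(1+ν)⁻¹ (1 + Σ_{n=1}^∞ ((n+1)^ν − n^ν) e^{-nz})`. -/
noncomputable def psiSeries (ν : ℝ) (z : ℂ) : ℂ :=
  ((1 / Real.Gamma (1 + ν) : ℝ) : ℂ) *
    (1 + ∑' n : ℕ, ((((n : ℝ) + 2) ^ ν - ((n : ℝ) + 1) ^ ν : ℝ) : ℂ)
        * Complex.exp (-(((n : ℕ) + 1 : ℕ) : ℂ) * z))

open Finset

noncomputable def rpowIncr (ν : ℝ) (k : ℕ) : ℝ := ((k : ℝ) + 1) ^ ν - (k : ℝ) ^ ν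

section rpowIncr

variable {ν : ℝ}

lemma rpowIncr_zero (hν : 0 < ν) : rpowIncr ν 0 = 1 := by
  simp [rpowIncr, Real.zero_rpow hν.ne']

lemma rpowIncr_nonneg (hν : 0 ≤ ν) (k : ℕ) : 0 ≤ rpowIncr ν k :=
  sub_nonneg.mpr (Real.rpow_le_rpow (by positivity) (by linarith) hν)

lemma rpowIncr_antitone (hν0 : 0 ≤ ν) (hν1 : ν ≤ 1) : Antitone (rpowIncr ν) := by
  refine antitone_nat_of_succ_le fun k => ?_
  have h := (Real.concaveOn_rpow hν0 hν1).2 (Set.mem_Ici.mpr (Nat.cast_nonneg k))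
    (Set.mem_Ici.mpr (by positivity : (0 : ℝ) ≤ k + 2)) (by norm_num : (0 : ℝ) ≤ 1 / 2)
    (by norm_num : (0 : ℝ) ≤ 1 / 2) (by norm_num)
  have hmid : (1 / 2 : ℝ) • (k : ℝ) + (1 / 2 : ℝ) • ((k : ℝ) + 2) = k + 1 := by
    simp only [smul_eq_mul]; ring
  rw [hmid, smul_eq_mul, smul_eq_mul] at h
  simp only [rpowIncr, Nat.cast_succ, add_assoc, one_add_one_eq_two]
  linarith

lemma rpowIncr_le_one (hν0 : 0 < ν) (hν1 : ν ≤ 1) (k : ℕ) : rpowIncr ν k ≤ 1 :=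
  rpowIncr_zero hν0 ▸ rpowIncr_antitone hν0.le hν1 (Nat.zero_le k)

lemma dgBeta_succ (k : ℕ) :
    dgBeta ν (k + 1) = (rpowIncr ν (k + 1) - rpowIncr ν k) / Real.Gamma (1 + ν) := by
  simp only [dgBeta, rpowIncr]
  push_cast
  ring_nf

lemma Gamma_mul_dgBeta (hν : 0 < ν) (k : ℕ) :
    Real.Gamma (1 + ν) * dgBeta ν k
      = rpowIncr ν k - if k = 0 then 0 else rpowIncr ν (k - 1) := by
  have hΓ : Real.Gamma (1 + ν) ≠ 0 := (Real.Gamma_pos_of_pos (by linarith)).ne'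
  rcases k with _ | k
  · simp [dgBeta, rpowIncr_zero hν, hΓ]
  · simp [dgBeta_succ, mul_div_cancel₀ _ hΓ]

lemma abs_dgBeta_succ (hν0 : 0 < ν) (hν1 : ν ≤ 1) (k : ℕ) :
    |dgBeta ν (k + 1)| = (rpowIncr ν k - rpowIncr ν (k + 1)) / Real.Gamma (1 + ν) := by
  rw [dgBeta_succ, abs_div, abs_of_pos (Real.Gamma_pos_of_pos (by linarith)), abs_sub_comm,
    abs_of_nonneg (sub_nonneg.mpr (rpowIncr_antitone hν0.le hν1 (Nat.le_succ k)))]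

lemma sum_abs_dgBeta_le (hν0 : 0 < ν) (hν1 : ν ≤ 1) (m : ℕ) :
    ∑ j ∈ Icc 1 m, |dgBeta ν j| ≤ dgBeta ν 0 := by
  rw [← Ico_add_one_right_eq_Icc, sum_Ico_eq_sum_range, Nat.add_sub_cancel]
  simp only [add_comm 1, abs_dgBeta_succ hν0 hν1]
  rw [← sum_div, sum_range_sub' (rpowIncr ν), rpowIncr_zero hν0]
  show _ ≤ 1 / Real.Gamma (1 + ν)
  gcongr
  linarith [rpowIncr_nonneg hν0.le m]

lemma abs_dgBeta_le (hν0 : 0 < ν) (hν1 : ν ≤ 1) (k : ℕ) : |dgBeta ν k| ≤ dgBeta ν 0 := by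
  rcases k with _ | k
  · exact (abs_of_pos (one_div_pos.mpr (Real.Gamma_pos_of_pos (by linarith)))).le
  · refine le_trans ?_ (sum_abs_dgBeta_le hν0 hν1 (k + 1))
    exact single_le_sum (f := fun j => |dgBeta ν j|) (fun j _ => abs_nonneg _)
      (mem_Icc.mpr ⟨Nat.le_add_left 1 k, le_rfl⟩)

end rpowIncr

def DGRecurrence {R : Type*} [CommRing R] (β : ℕ → R) (μ : R) (U : ℕ → R) : Prop :=
  ∀ n : ℕ, 1 ≤ n →
    (1 + β 0 * μ) * U n = U (n - 1) - μ * ∑ j ∈ Icc 1 (n - 1), β (n - j) * U j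

namespace DGRecurrence

variable {R : Type*} [CommRing R] {β U : ℕ → R} {μ : R}

lemma succ (h : DGRecurrence β μ U) (m : ℕ) :
    (1 + β 0 * μ) * U (m + 1) = U m - μ * ∑ j ∈ Icc 1 m, β (m + 1 - j) * U j := by
  simpa using h (m + 1) (Nat.le_add_left 1 m)

lemma map {S : Type*} [CommRing S] (h : DGRecurrence β μ U) (f : R →+* S) :
    DGRecurrence (fun k => f (β k)) (f μ) (fun k => f (U k)) := fun n hn => by
  simpa [map_sum] using congrArg f (h n hn)

lemma sub_add_mul_sum_range (h : DGRecurrence β μ U) (n : ℕ) :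
    U n - (if n = 0 then 0 else U (n - 1)) + μ * ∑ k ∈ range (n + 1), β (n - k) * U k
      = U 0 * ((if n = 0 then 1 else 0) + μ * β n) := by
  rcases n with _ | m
  · simp only [if_pos, zero_add, range_one, sum_singleton]; ring
  · have hIcc : ∑ j ∈ Icc 1 m, β (m + 1 - j) * U j
        = ∑ k ∈ range m, β (m + 1 - (k + 1)) * U (k + 1) := by
      rw [← Ico_add_one_right_eq_Icc, sum_Ico_eq_sum_range, Nat.add_sub_cancel]
      exact sum_congr rfl fun k _ => by rw [add_comm 1 k]
    rw [sum_range_succ, sum_range_succ', ← hIcc]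
    simp only [Nat.add_eq_zero_iff, one_ne_zero, and_false, if_false, Nat.add_sub_cancel,
      Nat.sub_self, Nat.sub_zero]
    linear_combination h.succ m

end DGRecurrence

lemma DGRecurrence.abs_le_one {β U : ℕ → ℝ} {μ : ℝ} (h : DGRecurrence β μ U) (hμ : 0 ≤ μ)
    (hβ : ∀ m, ∑ j ∈ Icc 1 m, |β j| ≤ β 0) (hU0 : |U 0| ≤ 1) (n : ℕ) : |U n| ≤ 1 := by
  induction n using Nat.strong_induction_on with
  | _ n ih =>
  rcases n with _ | m
  · exact hU0
  have hβ0 : 0 ≤ β 0 := by simpa using hβ 0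
  have hreflect : ∑ j ∈ Icc 1 m, |β (m + 1 - j)| = ∑ j ∈ Icc 1 m, |β j| := by
    rw [← Ico_add_one_right_eq_Icc,
      sum_Ico_reflect (fun j => |β j|) 1 (n := m + 1) (by omega)]
    congr 2; omega
  have hsum : |∑ j ∈ Icc 1 m, β (m + 1 - j) * U j| ≤ β 0 :=
    calc |∑ j ∈ Icc 1 m, β (m + 1 - j) * U j|
        ≤ ∑ j ∈ Icc 1 m, |β (m + 1 - j)| * |U j| :=
          (abs_sum_le_sum_abs _ _).trans_eq (sum_congr rfl fun j _ => abs_mul _ _)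
      _ ≤ ∑ j ∈ Icc 1 m, |β (m + 1 - j)| := by
          gcongr with j hj
          exact mul_le_of_le_one_right (abs_nonneg _) (ih j (by grind))
      _ ≤ β 0 := hreflect ▸ hβ m
  have hmain : (1 + β 0 * μ) * |U (m + 1)| ≤ 1 + β 0 * μ :=
    calc (1 + β 0 * μ) * |U (m + 1)| = |U m - μ * ∑ j ∈ Icc 1 m, β (m + 1 - j) * U j| := by
          rw [← h.succ, abs_mul, abs_of_nonneg (by positivity : 0 ≤ 1 + β 0 * μ)]
      _ ≤ |U m| + μ * |∑ j ∈ Icc 1 m, β (m + 1 - j) * U j| :=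
          (abs_sub _ _).trans_eq (by rw [abs_mul, abs_of_nonneg hμ])
      _ ≤ 1 + β 0 * μ := by
          have := ih m (Nat.lt_succ_self m)
          nlinarith
  exact le_of_mul_le_mul_left (by simpa using hmain) (by positivity)

section PowerSeries

lemma summable_norm_mul_pow_of_norm_le {R : Type*} [NormedRing R] [NormOneClass R] {c : ℕ → R}
    {C : ℝ} (hc : ∀ k, ‖c k‖ ≤ C) {w : R} (hw : ‖w‖ < 1) :
    Summable fun k => ‖c k * w ^ k‖ := by
  refine .of_nonneg_of_le (fun k => norm_nonneg _) (fun k => ?_)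
    ((summable_geometric_of_lt_one (norm_nonneg w) hw).mul_left C)
  calc ‖c k * w ^ k‖ ≤ ‖c k‖ * ‖w‖ ^ k :=
        (norm_mul_le _ _).trans (by gcongr; exact norm_pow_le _ _)
    _ ≤ C * ‖w‖ ^ k := by gcongr; exact hc k

variable {R : Type*} [CommRing R] [TopologicalSpace R] [IsTopologicalRing R]

lemma HasSum.ite_pred_mul_pow {f : ℕ → R} {w s : R} (h : HasSum (fun n => f n * w ^ n) s) :
    HasSum (fun n => (if n = 0 then 0 else f (n - 1)) * w ^ n) (w * s) := by
  rw [← hasSum_nat_add_iff' 1, sum_range_one, if_pos rfl, zero_mul, sub_zero]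
  refine (h.mul_left w).congr_fun fun n => ?_
  simp only [Nat.add_eq_zero_iff, one_ne_zero, and_false, if_false, Nat.add_sub_cancel]
  ring

end PowerSeries

lemma DGRecurrence.tsum_mul_eq {R : Type*} [NormedCommRing R] [CompleteSpace R]
    {β U : ℕ → R} {μ : R} (h : DGRecurrence β μ U) {w : R}
    (hU : Summable fun k => ‖U k * w ^ k‖) (hβ : Summable fun k => ‖β k * w ^ k‖) :
    (∑' k, U k * w ^ k) * (1 - w + μ * ∑' k, β k * w ^ k)
      = U 0 * (1 + μ * ∑' k, β k * w ^ k) := by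
  set F := ∑' k, U k * w ^ k
  set B := ∑' k, β k * w ^ k
  have hF : HasSum (fun k => U k * w ^ k) F := hU.of_norm.hasSum
  have hB : HasSum (fun k => β k * w ^ k) B := hβ.of_norm.hasSum
  have hFB : HasSum (fun n => (∑ k ∈ range (n + 1), β (n - k) * U k) * w ^ n) (F * B) := by
    convert hasSum_sum_range_mul_of_summable_norm hU hβ using 2 with n
    rw [sum_mul]
    refine sum_congr rfl fun k hk => ?_
    rw [← pow_mul_pow_sub w (mem_range_succ_iff.mp hk)]
    ring
  have hone : HasSum (fun n => (if n = 0 then 1 else 0) * w ^ n) (1 : R) := by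
    refine (hasSum_ite_eq 0 (1 : R)).congr_fun fun n => ?_
    split_ifs with hn <;> simp [hn]
  have hlhs := (hF.sub hF.ite_pred_mul_pow).add (hFB.mul_left μ)
  have hrhs := (hone.add (hB.mul_left μ)).mul_left (U 0)
  have hterms : (fun n => U n * w ^ n - (if n = 0 then 0 else U (n - 1)) * w ^ n
        + μ * ((∑ k ∈ range (n + 1), β (n - k) * U k) * w ^ n))
      = fun n => U 0 * ((if n = 0 then 1 else 0) * w ^ n + μ * (β n * w ^ n)) := by
    funext n
    linear_combination w ^ n * h.sub_add_mul_sum_range n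
  rw [hterms] at hlhs
  linear_combination hlhs.unique hrhs

section Generating

variable {ν : ℝ}

lemma norm_exp_neg_lt_one {z : ℂ} (hz : 0 < z.re) : ‖Complex.exp (-z)‖ < 1 := by
  simpa [Complex.norm_exp] using hz

lemma summable_norm_rpowIncr_mul_pow (hν0 : 0 < ν) (hν1 : ν ≤ 1) {w : ℂ} (hw : ‖w‖ < 1) :
    Summable fun k => ‖(rpowIncr ν k : ℂ) * w ^ k‖ :=
  summable_norm_mul_pow_of_norm_le (C := 1) (fun k => by
    rw [Complex.norm_real, Real.norm_of_nonneg (rpowIncr_nonneg hν0.le k)]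
    exact rpowIncr_le_one hν0 hν1 k) hw

lemma psiSeries_eq_tsum (hν0 : 0 < ν) (hν1 : ν ≤ 1) {z : ℂ} (hz : 0 < z.re) :
    psiSeries ν z
      = ((Real.Gamma (1 + ν))⁻¹ : ℂ) * ∑' k, (rpowIncr ν k : ℂ) * Complex.exp (-z) ^ k := by
  have hsum := (summable_norm_rpowIncr_mul_pow hν0 hν1 (norm_exp_neg_lt_one hz)).of_norm
  rw [psiSeries, hsum.tsum_eq_zero_add, pow_zero, mul_one, rpowIncr_zero hν0]
  push_cast
  rw [one_div]
  congr 3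
  funext n
  rw [← Complex.exp_nat_mul, rpowIncr]
  push_cast
  ring_nf

lemma hasSum_dgBeta_mul_exp_neg_pow (hν0 : 0 < ν) (hν1 : ν ≤ 1) {z : ℂ} (hz : 0 < z.re) :
    HasSum (fun k => (dgBeta ν k : ℂ) * Complex.exp (-z) ^ k)
      ((1 - Complex.exp (-z)) * psiSeries ν z) := by
  rw [psiSeries_eq_tsum hν0 hν1 hz]
  set w := Complex.exp (-z)
  have hΓ : (Real.Gamma (1 + ν) : ℂ) ≠ 0 :=
    Complex.ofReal_ne_zero.mpr (Real.Gamma_pos_of_pos (by linarith)).ne'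
  have hb := (summable_norm_rpowIncr_mul_pow hν0 hν1 (norm_exp_neg_lt_one hz)).of_norm.hasSum
  rw [mul_left_comm, one_sub_mul]
  refine ((hb.sub hb.ite_pred_mul_pow).mul_left ((Real.Gamma (1 + ν))⁻¹ : ℂ)).congr_fun
    fun k => ?_
  have hk := congrArg (fun x : ℝ => (x : ℂ)) (Gamma_mul_dgBeta hν0 k)
  field_simp
  split_ifs at hk ⊢ <;> push_cast at hk <;> linear_combination w ^ k * hk

theorem hasSum_ite_mul_exp_neg_pow_of_dgRecurrence (hν0 : 0 < ν) (hν1 : ν ≤ 1) {μ : ℝ}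
    (hμ : 0 < μ) {U : ℕ → ℝ} (hU0 : U 0 = 1) (h : DGRecurrence (dgBeta ν) μ U)
    {z : ℂ} (hz : 0 < z.re) :
    HasSum (fun m => if m = 0 then 0 else (U m : ℂ) * Complex.exp (-z) ^ m)
      ((1 + μ * psiSeries ν z) * (Complex.exp z - 1))⁻¹ := by
  have hB := hasSum_dgBeta_mul_exp_neg_pow hν0 hν1 hz
  set w := Complex.exp (-z)
  have hw := norm_exp_neg_lt_one hz
  have hU : Summable fun k => ‖(U k : ℂ) * w ^ k‖ :=
    summable_norm_mul_pow_of_norm_le (C := 1) (fun k => by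
      rw [Complex.norm_real, Real.norm_eq_abs]
      exact h.abs_le_one hμ.le (sum_abs_dgBeta_le hν0 hν1) (by simp [hU0]) k) hw
  have hβ : Summable fun k => ‖(dgBeta ν k : ℂ) * w ^ k‖ :=
    summable_norm_mul_pow_of_norm_le (fun k => by
      rw [Complex.norm_real, Real.norm_eq_abs]; exact abs_dgBeta_le hν0 hν1 k) hw
  have hgen := (h.map Complex.ofRealHom).tsum_mul_eq hU hβ
  simp only [Complex.ofRealHom_eq_coe, hU0, Complex.ofReal_one, one_mul,
    hB.tsum_eq] at hgen
  have hew : Complex.exp z * w = 1 := by rw [← Complex.exp_add, add_neg_cancel, Complex.exp_zero]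
  have hinv : ((1 + μ * psiSeries ν z) * (Complex.exp z - 1))⁻¹
      = ∑' k, (U k : ℂ) * w ^ k - (U 0 : ℂ) * w ^ 0 := by
    rw [hU0, Complex.ofReal_one, pow_zero, mul_one]
    refine (eq_inv_of_mul_eq_one_right ?_).symm
    -- `hgen` says `(∑ Uᵏ wᵏ - 1) (1 - w) (1 + μψ) = w`, and `exp z - 1 = exp z (1 - w)`
    linear_combination Complex.exp z * hgen
      + (1 + (1 + μ * psiSeries ν z) * (∑' k, (U k : ℂ) * w ^ k - 1)) * hew
  rw [hinv]
  exact hasSum_ite_sub_hasSum hU.of_norm.hasSum 0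

end Generating

section Inversion

open Complex in
lemma integral_exp_int_mul_I_mul (j : ℤ) :
    ∫ y in (-Real.pi)..Real.pi, exp (j * I * y) = if j = 0 then 2 * Real.pi else 0 := by
  split_ifs with hj
  · simp [hj, two_mul]
  have hjI : (j : ℂ) * I ≠ 0 := mul_ne_zero (Int.cast_ne_zero.mpr hj) I_ne_zero
  rw [integral_exp_mul_complex hjI, ofReal_zero, div_eq_zero_iff, sub_eq_zero]
  left
  rw [exp_eq_exp_iff_exists_int]
  exact ⟨j, by push_cast; ring⟩

open Complex in
theorem integral_exp_mul_eq_of_hasSum {c : ℕ → ℂ} {C : ℝ} (hc : ∀ m, ‖c m‖ ≤ C) {a : ℝ}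
    (ha : 0 < a) {g : ℝ → ℂ} (hg : ∀ y : ℝ, HasSum (fun m => c m * exp (-(a + y * I)) ^ m) (g y))
    (k : ℕ) :
    ∫ y in (-Real.pi)..Real.pi, exp (k * (a + y * I)) * g y = 2 * Real.pi * c k := by
  have hterm : ∀ m (y : ℝ), exp (k * (a + y * I)) * (c m * exp (-(a + y * I)) ^ m)
      = c m * exp (((k : ℂ) - m) * a) * exp (((k - m : ℤ) : ℂ) * I * y) := by
    intro m y
    rw [← exp_nat_mul, mul_left_comm, ← exp_add, mul_assoc, ← exp_add]
    push_cast
    ring_nf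
  have hint : ∀ m,
      ∫ y in (-Real.pi)..Real.pi, exp (k * (a + y * I)) * (c m * exp (-(a + y * I)) ^ m)
        = if m = k then 2 * Real.pi * c k else 0 := by
    intro m
    simp_rw [hterm, intervalIntegral.integral_const_mul, integral_exp_int_mul_I_mul,
      sub_eq_zero, Nat.cast_inj, eq_comm (a := k)]
    split_ifs with hm
    · simp only [hm, sub_self, zero_mul, exp_zero, mul_one]
      push_cast
      ring
    · simp
  have hnorm : ∀ m (y : ℝ), ‖exp (k * (a + y * I)) * (c m * exp (-(a + y * I)) ^ m)‖
      ≤ C * Real.exp (k * a) * Real.exp (-a) ^ m := by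
    intro m y
    rw [norm_mul, norm_mul, norm_pow, norm_exp, norm_exp]
    simp only [mul_re, add_re, ofReal_re, I_re, I_im, ofReal_im, natCast_re, natCast_im, neg_re,
      mul_zero, mul_one, sub_zero, zero_mul, add_zero]
    have := mul_le_mul_of_nonneg_right (hc m)
      (by positivity : (0 : ℝ) ≤ Real.exp (k * a) * Real.exp (-a) ^ m)
    linarith
  have hsum := intervalIntegral.hasSum_integral_of_dominated_convergence
    (μ := MeasureTheory.volume) (a := -Real.pi) (b := Real.pi)
    (fun m _ => C * Real.exp (k * a) * Real.exp (-a) ^ m)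
    (fun m => by apply Continuous.aestronglyMeasurable; fun_prop)
    (fun m => .of_forall fun y _ => hnorm m y)
    (.of_forall fun _ _ => (summable_geometric_of_lt_one (Real.exp_pos _).le
      (Real.exp_lt_one_iff.mpr (neg_lt_zero.mpr ha))).mul_left _)
    intervalIntegrable_const
    (.of_forall fun y _ => (hg y).mul_left (exp (k * (a + y * I))))
  simp_rw [hint] at hsum
  exact hsum.unique (hasSum_ite_eq k _)

end Inversion

theorem stmt18 (ν : ℝ) (hν0 : 0 < ν) (hν1 : ν < 1) (μ : ℝ) (hμ : 0 < μ)
    (U : ℕ → ℝ) (hU0 : U 0 = 1)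
    (hUrec : ∀ n : ℕ, 1 ≤ n →
      (1 + dgBeta ν 0 * μ) * U n
        = U (n - 1) - μ * ∑ j ∈ Finset.Icc 1 (n - 1), dgBeta ν (n - j) * U j)
    (a : ℝ) (ha : 0 < a) (n : ℕ) (hn : 1 ≤ n) :
    (U n : ℂ) = (1 / (2 * Real.pi) : ℝ) *
      ∫ y in (-Real.pi)..Real.pi,
        Complex.exp ((n : ℂ) * ((a : ℂ) + (y : ℂ) * Complex.I))
          / ((1 + (μ : ℂ) * psiSeries ν ((a : ℂ) + (y : ℂ) * Complex.I))
              * (Complex.exp ((a : ℂ) + (y : ℂ) * Complex.I) - 1)) := by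
  have hrec : DGRecurrence (dgBeta ν) μ U := hUrec
  have hU : ∀ m, ‖if m = 0 then 0 else (U m : ℂ)‖ ≤ 1 := fun m => by
    split_ifs
    · simp
    · rw [Complex.norm_real, Real.norm_eq_abs]
      exact hrec.abs_le_one hμ.le (sum_abs_dgBeta_le hν0 hν1.le) (by simp [hU0]) m
  have hgen : ∀ y : ℝ, HasSum
      (fun m => (if m = 0 then 0 else (U m : ℂ)) * Complex.exp (-(a + y * Complex.I)) ^ m)
      ((1 + μ * psiSeries ν (a + y * Complex.I)) * (Complex.exp (a + y * Complex.I) - 1))⁻¹ :=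
    fun y => by
      simpa only [ite_mul, zero_mul] using
        hasSum_ite_mul_exp_neg_pow_of_dgRecurrence hν0 hν1.le hμ hU0 hrec (by simpa using ha)
  simp_rw [div_eq_mul_inv]
  rw [integral_exp_mul_eq_of_hasSum hU ha hgen n, if_neg (by omega)]
  push_cast
  field_simp
end
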